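/- Let Ω ⊆ ℂⁿ be an open convex set, let L ⊆ Ω be a compact convex set, and let K ⊆ ℂⁿ be a compact convex set with K ∩ Ω = ∅. Then for every holomorphic polynomial P on ℂⁿ and every ε > 0 there exists a holomorphic polynomial Q on ℂⁿ such that sup_{z ∈ L} ‖Q(z)‖ < ε and sup_{z ∈ K} ‖Q(z) − P(z)‖ < ε. -/

import Mathlib

open Set Filter Topology

noncomputable section

/-- Evaluation of a multivariate polynomial as a function on `ℂⁿ = Fin n → ℂ`. -/
def mvEval {n : ℕ} (p : MvPolynomial (Fin n) ℂ) : (Fin n → ℂ) → ℂ :=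
  fun z => MvPolynomial.eval z p

/-- The polynomially convex hull of a set in `ℂⁿ`. -/
def polyHull {n : ℕ} (K : Set (Fin n → ℂ)) : Set (Fin n → ℂ) :=
  {z | ∀ p : MvPolynomial (Fin n) ℂ, ‖mvEval p z‖ ≤ sSup ((fun w => ‖mvEval p w‖) '' K)}

/-- A set in `ℂⁿ` is polynomially convex if it equals its polynomially convex hull. -/
def IsPolyConvex {n : ℕ} (K : Set (Fin n → ℂ)) : Prop := polyHull K = K

/-- The polynomially convex hull of a subset of `ℂ`. -/
def polyHull1 (F : Set ℂ) : Set ℂ :=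
  {z | ∀ p : Polynomial ℂ, ‖p.eval z‖ ≤ sSup ((fun w => ‖p.eval w‖) '' F)}

/-- A subset of `ℂ` is polynomially convex if it equals its polynomially convex hull. -/
def IsPolyConvex1 (F : Set ℂ) : Prop := polyHull1 F = F

/-- Partial derivative in the `i`-th coordinate direction. -/
def pd {n : ℕ} (i : Fin n) (f : (Fin n → ℂ) → ℂ) : (Fin n → ℂ) → ℂ :=
  fun z => fderiv ℂ f z (Pi.single i 1)

/-- Iterated partial derivative `D^ℓ = ∂^{ℓ₁+⋯+ℓₙ}/∂z₁^{ℓ₁}⋯∂zₙ^{ℓₙ}`. -/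
def Dml {n : ℕ} (ℓ : Fin n → ℕ) (f : (Fin n → ℂ) → ℂ) : (Fin n → ℂ) → ℂ :=
  (List.finRange n).foldr (fun i g => (pd i)^[ℓ i] g) f

/-- Partial sums `S_λ` of a Taylor-type series around `ζ`, with coefficients computed from a
given family `g` of (extended) partial derivatives: the coefficient of the monomial
`(z-ζ)^{N_j}` is `g (N_j) ζ / (N_{j,1}! ⋯ N_{j,n}!)`. -/
def pSumExt {n : ℕ} (Nj : ℕ → Fin n → ℕ) (g : (Fin n → ℕ) → (Fin n → ℂ) → ℂ)
    (ζ : Fin n → ℂ) (lam : ℕ) : (Fin n → ℂ) → ℂ :=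
  fun z => ∑ j ∈ Finset.range (lam + 1),
    (((∏ i, Nat.factorial (Nj j i) : ℕ) : ℂ))⁻¹ * g (Nj j) ζ * ∏ i, (z i - ζ i) ^ (Nj j i)

/-- Partial sums `S_λ(f,ζ)` of the Taylor development of `f` around `ζ`. -/
def pSum {n : ℕ} (Nj : ℕ → Fin n → ℕ) (f : (Fin n → ℂ) → ℂ)
    (ζ : Fin n → ℂ) (lam : ℕ) : (Fin n → ℂ) → ℂ :=
  pSumExt Nj (fun ℓ => Dml ℓ f) ζ lam

/-- The space `O(Ω)` of holomorphic functions on `Ω`. -/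
def Ospace (n : ℕ) (Ω : Set (Fin n → ℂ)) : Type :=
  {f : (Fin n → ℂ) → ℂ // DifferentiableOn ℂ f Ω}

/-- Topology of uniform convergence on compact subsets of `Ω` on `O(Ω)` (the compact-open
topology induced via restriction to `Ω`). -/
instance (n : ℕ) (Ω : Set (Fin n → ℂ)) : TopologicalSpace (Ospace n Ω) :=
  TopologicalSpace.induced
    (fun f : Ospace n Ω =>
      (⟨Ω.restrict f.1, continuousOn_iff_continuous_restrict.mp f.2.continuousOn⟩ : C(Ω, ℂ)))
    inferInstance

/-- Membership in `A^∞(Ω)`: `f` is holomorphic on `Ω` and each partial derivative `D^ℓ f`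
extends continuously to the closure of `Ω`. -/
def AinfMem (n : ℕ) (Ω : Set (Fin n → ℂ)) (f : (Fin n → ℂ) → ℂ) : Prop :=
  DifferentiableOn ℂ f Ω ∧
    ∀ ℓ : Fin n → ℕ, ∃ g : (Fin n → ℂ) → ℂ,
      ContinuousOn g (closure Ω) ∧ Set.EqOn g (Dml ℓ f) Ω

/-- The space `A^∞(Ω)`. -/
def AinfSpace (n : ℕ) (Ω : Set (Fin n → ℂ)) : Type :=
  {f : (Fin n → ℂ) → ℂ // AinfMem n Ω f}

/-- The chosen continuous extension of `D^ℓ f` to the closure of `Ω`, for `f ∈ A^∞(Ω)`.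
(Its restriction to the closure of `Ω` is uniquely determined.) -/
def AinfExt {n : ℕ} {Ω : Set (Fin n → ℂ)} (f : AinfSpace n Ω) (ℓ : Fin n → ℕ) :
    (Fin n → ℂ) → ℂ :=
  Classical.choose (f.2.2 ℓ)

lemma AinfExt_continuousOn {n : ℕ} {Ω : Set (Fin n → ℂ)} (f : AinfSpace n Ω) (ℓ : Fin n → ℕ) :
    ContinuousOn (AinfExt f ℓ) (closure Ω) :=
  (Classical.choose_spec (f.2.2 ℓ)).1

lemma AinfExt_eqOn {n : ℕ} {Ω : Set (Fin n → ℂ)} (f : AinfSpace n Ω) (ℓ : Fin n → ℕ) :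
    Set.EqOn (AinfExt f ℓ) (Dml ℓ f.1) Ω :=
  (Classical.choose_spec (f.2.2 ℓ)).2

/-- Topology on `A^∞(Ω)`: uniform convergence of every partial derivative on every compact
subset of the closure of `Ω`. -/
instance (n : ℕ) (Ω : Set (Fin n → ℂ)) : TopologicalSpace (AinfSpace n Ω) :=
  TopologicalSpace.induced
    (fun f : AinfSpace n Ω => fun ℓ : Fin n → ℕ =>
      (⟨(closure Ω).restrict (AinfExt f ℓ),
        continuousOn_iff_continuous_restrict.mp (AinfExt_continuousOn f ℓ)⟩ :
          C(closure Ω, ℂ)))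
    inferInstance

/-- A smooth compact curve in `ℂⁿ`: the image of an injective `C^∞` map with
nowhere-vanishing derivative, defined on a compact interval (an arc) or on the
circle (a closed curve, modelled by a 1-periodic map). -/
def IsSmoothCompactCurve {n : ℕ} (K : Set (Fin n → ℂ)) : Prop :=
  ∃ γ : ℝ → (Fin n → ℂ), ContDiff ℝ (⊤ : ℕ∞) γ ∧ (∀ t, deriv γ t ≠ 0) ∧ K = γ '' Set.Icc 0 1 ∧
    (Set.InjOn γ (Set.Icc 0 1) ∨ (Function.Periodic γ 1 ∧ Set.InjOn γ (Set.Ico 0 1)))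

/-- A disjoint union of finitely many smooth compact curves. -/
def IsFiniteUnionOfSmoothCurves {n : ℕ} (K : Set (Fin n → ℂ)) : Prop :=
  ∃ (m : ℕ) (C : Fin m → Set (Fin n → ℂ)),
    (∀ i, IsSmoothCompactCurve (C i)) ∧ Pairwise (Function.onFun Disjoint C) ∧ K = ⋃ i, C i


set_option maxHeartbeats 1000000

namespace RungeAux

/-- `f` is uniformly approximable by polynomials on `S`. -/
def PApprox (S : Set ℂ) (f : ℂ → ℂ) : Prop :=
  ∀ ε : ℝ, 0 < ε → ∃ p : Polynomial ℂ, ∀ w ∈ S, ‖f w - p.eval w‖ ≤ ε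

lemma papprox_poly (S : Set ℂ) (p : Polynomial ℂ) : PApprox S (fun w => p.eval w) :=
  fun ε hε => ⟨p, fun w _ => by simp [hε.le]⟩

lemma papprox_congr {S : Set ℂ} {f g : ℂ → ℂ} (h : ∀ w ∈ S, f w = g w)
    (hf : PApprox S f) : PApprox S g := by
  intro ε hε
  obtain ⟨p, hp⟩ := hf ε hε
  exact ⟨p, fun w hw => by rw [← h w hw]; exact hp w hw⟩

lemma papprox_smul {S : Set ℂ} {f : ℂ → ℂ} (c : ℂ) (hf : PApprox S f) :
    PApprox S (fun w => c * f w) := by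
  intro ε hε
  obtain ⟨p, hp⟩ := hf (ε / (‖c‖ + 1)) (by positivity)
  refine ⟨Polynomial.C c * p, fun w hw => ?_⟩
  have h1 : ‖c * f w - (Polynomial.C c * p).eval w‖ = ‖c‖ * ‖f w - p.eval w‖ := by
    rw [Polynomial.eval_mul, Polynomial.eval_C, ← mul_sub, norm_mul]
  rw [h1]
  calc ‖c‖ * ‖f w - p.eval w‖ ≤ ‖c‖ * (ε / (‖c‖ + 1)) := by
        exact mul_le_mul_of_nonneg_left (hp w hw) (norm_nonneg c)
    _ ≤ ε := by
        rw [mul_comm, div_mul_eq_mul_div, div_le_iff₀ (by positivity)]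
        nlinarith [norm_nonneg c]

lemma papprox_add {S : Set ℂ} {f g : ℂ → ℂ} (hf : PApprox S f) (hg : PApprox S g) :
    PApprox S (fun w => f w + g w) := by
  intro ε hε
  obtain ⟨p, hp⟩ := hf (ε / 2) (by positivity)
  obtain ⟨q, hq⟩ := hg (ε / 2) (by positivity)
  refine ⟨p + q, fun w hw => ?_⟩
  have : f w + g w - (p + q).eval w = (f w - p.eval w) + (g w - q.eval w) := by
    rw [Polynomial.eval_add]; ring
  rw [this]
  calc ‖_ + _‖ ≤ ‖f w - p.eval w‖ + ‖g w - q.eval w‖ := norm_add_le _ _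
    _ ≤ ε / 2 + ε / 2 := add_le_add (hp w hw) (hq w hw)
    _ = ε := by ring

lemma papprox_bound {S : Set ℂ} {f : ℂ → ℂ} (hS : IsCompact S) (hf : PApprox S f) :
    ∃ C : ℝ, 0 ≤ C ∧ ∀ w ∈ S, ‖f w‖ ≤ C := by
  obtain ⟨p, hp⟩ := hf 1 one_pos
  obtain ⟨C, hC⟩ := hS.exists_bound_of_continuousOn p.continuous.continuousOn
  refine ⟨max C 0 + 1, by positivity, fun w hw => ?_⟩
  calc ‖f w‖ ≤ ‖f w - p.eval w‖ + ‖p.eval w‖ := by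
        simpa using norm_add_le (f w - p.eval w) (p.eval w)
    _ ≤ 1 + max C 0 := add_le_add (hp w hw) ((hC w hw).trans (le_max_left _ _))
    _ = max C 0 + 1 := by ring

lemma papprox_mul {S : Set ℂ} {f g : ℂ → ℂ} (hS : IsCompact S)
    (hf : PApprox S f) (hg : PApprox S g) : PApprox S (fun w => f w * g w) := by
  intro ε hε
  obtain ⟨Cf, hCf0, hCf⟩ := papprox_bound hS hf
  obtain ⟨q, hq⟩ := hg (ε / (2 * (Cf + 1))) (by positivity)
  obtain ⟨Cq, hCq⟩ := hS.exists_bound_of_continuousOn q.continuous.continuousOn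
  obtain ⟨p, hp⟩ := hf (ε / (2 * (max Cq 0 + 1))) (by positivity)
  refine ⟨p * q, fun w hw => ?_⟩
  have key : f w * g w - (p * q).eval w
      = f w * (g w - q.eval w) + (f w - p.eval w) * q.eval w := by
    rw [Polynomial.eval_mul]; ring
  rw [key]
  have h1 : ‖f w * (g w - q.eval w)‖ ≤ Cf * (ε / (2 * (Cf + 1))) := by
    rw [norm_mul]
    exact mul_le_mul (hCf w hw) (hq w hw) (norm_nonneg _) hCf0
  have h2 : ‖(f w - p.eval w) * q.eval w‖ ≤ (ε / (2 * (max Cq 0 + 1))) * max Cq 0 := by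
    rw [norm_mul]
    exact mul_le_mul (hp w hw) ((hCq w hw).trans (le_max_left _ _)) (norm_nonneg _)
      (by positivity)
  calc ‖_ + _‖ ≤ ‖f w * (g w - q.eval w)‖ + ‖(f w - p.eval w) * q.eval w‖ := norm_add_le _ _
    _ ≤ Cf * (ε / (2 * (Cf + 1))) + (ε / (2 * (max Cq 0 + 1))) * max Cq 0 := add_le_add h1 h2
    _ ≤ ε / 2 + ε / 2 := by
        have hA : Cf * (ε / (2 * (Cf + 1))) ≤ ε / 2 := by
          rw [mul_comm, div_mul_eq_mul_div, div_le_iff₀ (by positivity)]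
          nlinarith
        have hB : (ε / (2 * (max Cq 0 + 1))) * max Cq 0 ≤ ε / 2 := by
          rw [div_mul_eq_mul_div, div_le_iff₀ (by positivity)]
          nlinarith [le_max_right Cq 0, hε.le]
        exact add_le_add hA hB
    _ = ε := by ring

lemma papprox_const (S : Set ℂ) (c : ℂ) : PApprox S (fun _ => c) :=
  papprox_congr (fun w _ => by simp) (papprox_poly S (Polynomial.C c))

lemma papprox_pow {S : Set ℂ} {f : ℂ → ℂ} (hS : IsCompact S) (hf : PApprox S f) :
    ∀ k : ℕ, PApprox S (fun w => f w ^ k) := by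
  intro k
  induction k with
  | zero => exact papprox_congr (fun w _ => by simp) (papprox_const S 1)
  | succ m ih =>
      exact papprox_congr (fun w _ => by rw [pow_succ])
        (papprox_mul hS ih hf)

lemma papprox_sum {S : Set ℂ} {ι : Type*} (s : Finset ι) (F : ι → ℂ → ℂ)
    (h : ∀ i ∈ s, PApprox S (F i)) : PApprox S (fun w => ∑ i ∈ s, F i w) := by
  classical
  induction s using Finset.induction_on with
  | empty => exact papprox_congr (fun w _ => by simp) (papprox_const S 0)
  | insert a s' hnot ih =>
      have h1 := h a (Finset.mem_insert_self a s')
      have h2 := ih (fun i hi => h i (Finset.mem_insert_of_mem hi))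
      exact papprox_congr (fun w _ => by rw [Finset.sum_insert hnot])
        (papprox_add h1 h2)

lemma papprox_lim {S : Set ℂ} {f : ℂ → ℂ}
    (h : ∀ ε : ℝ, 0 < ε → ∃ g : ℂ → ℂ, PApprox S g ∧ ∀ w ∈ S, ‖f w - g w‖ ≤ ε) :
    PApprox S f := by
  intro ε hε
  obtain ⟨g, hg, hfg⟩ := h (ε / 2) (by positivity)
  obtain ⟨p, hp⟩ := hg (ε / 2) (by positivity)
  refine ⟨p, fun w hw => ?_⟩
  calc ‖f w - p.eval w‖ = ‖(f w - g w) + (g w - p.eval w)‖ := by ring_nf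
    _ ≤ ‖f w - g w‖ + ‖g w - p.eval w‖ := norm_add_le _ _
    _ ≤ ε / 2 + ε / 2 := add_le_add (hfg w hw) (hp w hw)
    _ = ε := by ring

/-- Geometric expansion with remainder. -/
lemma inv_sub_geom (a b : ℂ) (ha : a ≠ 0) (hab : a - b ≠ 0) (N : ℕ) :
    (a - b)⁻¹ = (∑ j ∈ Finset.range N, b ^ j * (a⁻¹) ^ (j + 1))
      + (b * a⁻¹) ^ N * (a - b)⁻¹ := by
  induction N with
  | zero => simp
  | succ n ih =>
      conv_lhs => rw [ih]
      rw [Finset.sum_range_succ]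
      have : (b * a⁻¹) ^ n * (a - b)⁻¹
          = b ^ n * a⁻¹ ^ (n + 1) + (b * a⁻¹) ^ (n + 1) * (a - b)⁻¹ := by
        field_simp
        ring_nf
        rw [mul_assoc (b ^ n) a, mul_inv_cancel₀ ha, mul_one]
      rw [this]
      ring

lemma papprox_base {S : Set ℂ} {M : ℝ} (hM : 1 ≤ M) (hS : S ⊆ Metric.closedBall 0 M)
    (ζ : ℂ) (hζ : 2 * M + 2 ≤ ‖ζ‖) : PApprox S (fun w => (ζ - w)⁻¹) := by
  intro ε hε
  obtain ⟨N, hN⟩ := exists_pow_lt_of_lt_one hε (by norm_num : (1:ℝ)/2 < 1)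
  refine ⟨∑ j ∈ Finset.range N, Polynomial.C (ζ⁻¹ ^ (j + 1)) * Polynomial.X ^ j,
    fun w hw => ?_⟩
  have hwM : ‖w‖ ≤ M := by
    have := hS hw
    simpa [Metric.mem_closedBall, dist_eq_norm] using this
  have hζpos : (0:ℝ) < ‖ζ‖ := by linarith
  have hζ0 : ζ ≠ 0 := by
    intro h0; rw [h0] at hζpos; simp at hζpos
  have hζwn : M + 2 ≤ ‖ζ - w‖ := by
    have := norm_sub_norm_le ζ w
    linarith
  have hζw : ζ - w ≠ 0 := by
    intro h0
    rw [h0] at hζwn; simp at hζwn; linarith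
  have hev : Polynomial.eval w (∑ j ∈ Finset.range N,
      Polynomial.C (ζ⁻¹ ^ (j + 1)) * Polynomial.X ^ j)
      = ∑ j ∈ Finset.range N, w ^ j * (ζ⁻¹) ^ (j + 1) := by
    rw [Polynomial.eval_finset_sum]
    refine Finset.sum_congr rfl (fun j _ => ?_)
    rw [Polynomial.eval_mul, Polynomial.eval_C, Polynomial.eval_pow, Polynomial.eval_X]
    ring
  rw [hev]
  have hid := inv_sub_geom ζ w hζ0 hζw N
  have hrem : (ζ - w)⁻¹ - ∑ j ∈ Finset.range N, w ^ j * (ζ⁻¹) ^ (j + 1)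
      = (w * ζ⁻¹) ^ N * (ζ - w)⁻¹ := by linear_combination hid
  rw [hrem, norm_mul, norm_pow, norm_mul, norm_inv, norm_inv]
  have h1 : ‖w‖ * ‖ζ‖⁻¹ ≤ 1 / 2 := by
    rw [mul_inv_le_iff₀ hζpos]
    linarith
  have h2 : ‖ζ - w‖⁻¹ ≤ 1 := by
    rw [inv_le_one_iff₀]
    right; linarith
  calc (‖w‖ * ‖ζ‖⁻¹) ^ N * ‖ζ - w‖⁻¹ ≤ (1 / 2) ^ N * 1 := by
        apply mul_le_mul _ h2 (by positivity) (by positivity)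
        exact pow_le_pow_left₀ (by positivity) h1 N
    _ ≤ ε := by rw [mul_one]; exact hN.le

lemma papprox_push {S : Set ℂ} (hS : IsCompact S) {d : ℝ} (hd : 0 < d) (ζ ζ' : ℂ)
    (hζ : ∀ w ∈ S, d ≤ ‖ζ - w‖) (hζ' : ‖ζ - ζ'‖ ≤ d / 2)
    (h : PApprox S (fun w => (ζ - w)⁻¹)) : PApprox S (fun w => (ζ' - w)⁻¹) := by
  apply papprox_lim
  intro ε hε
  obtain ⟨N, hN⟩ := exists_pow_lt_of_lt_one (show (0:ℝ) < ε * d / 2 by positivity)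
    (by norm_num : (1:ℝ)/2 < 1)
  refine ⟨fun w => ∑ j ∈ Finset.range N, (ζ - ζ') ^ j * ((ζ - w)⁻¹) ^ (j + 1), ?_, ?_⟩
  · exact papprox_sum _ _ (fun j _ => papprox_smul _ (papprox_pow hS h (j + 1)))
  · intro w hw
    have h1 : (0:ℝ) < ‖ζ - w‖ := lt_of_lt_of_le hd (hζ w hw)
    have hζw : ζ - w ≠ 0 := by
      intro h0; rw [h0] at h1; simp at h1
    have h2 : d / 2 ≤ ‖ζ' - w‖ := by
      have h3 : ‖ζ - w‖ ≤ ‖ζ - ζ'‖ + ‖ζ' - w‖ := by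
        have : ζ - w = (ζ - ζ') + (ζ' - w) := by ring
        rw [this]; exact norm_add_le _ _
      linarith [hζ w hw]
    have hζ'w : ζ' - w ≠ 0 := by
      intro h0; rw [h0] at h2; simp at h2; linarith
    have heq : ζ - w - (ζ - ζ') = ζ' - w := by ring
    have hid := inv_sub_geom (ζ - w) (ζ - ζ') hζw (by rw [heq]; exact hζ'w) N
    rw [heq] at hid
    have hrem : (ζ' - w)⁻¹ - ∑ j ∈ Finset.range N, (ζ - ζ') ^ j * ((ζ - w)⁻¹) ^ (j + 1)
        = ((ζ - ζ') * (ζ - w)⁻¹) ^ N * (ζ' - w)⁻¹ := by linear_combination hid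
    rw [hrem, norm_mul, norm_pow, norm_mul, norm_inv, norm_inv]
    have hr : ‖ζ - ζ'‖ * ‖ζ - w‖⁻¹ ≤ 1 / 2 := by
      rw [mul_inv_le_iff₀ h1]
      calc ‖ζ - ζ'‖ ≤ d / 2 := hζ'
        _ ≤ 1 / 2 * ‖ζ - w‖ := by linarith [hζ w hw]
    have hrm : ‖ζ' - w‖⁻¹ ≤ 2 / d := by
      rw [inv_le_comm₀ (by linarith) (by positivity), inv_div]
      exact h2
    calc (‖ζ - ζ'‖ * ‖ζ - w‖⁻¹) ^ N * ‖ζ' - w‖⁻¹ ≤ (1 / 2) ^ N * (2 / d) := by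
          apply mul_le_mul _ hrm (by positivity) (by positivity)
          exact pow_le_pow_left₀ (by positivity) hr N
      _ ≤ ε := by
          have hmul := mul_le_mul_of_nonneg_right hN.le (by positivity : (0:ℝ) ≤ 2 / d)
          calc (1/2:ℝ) ^ N * (2/d) ≤ (ε * d / 2) * (2/d) := hmul
            _ = ε := by field_simp

lemma papprox_walk {S : Set ℂ} (hS : IsCompact S) (T ρ2 : ℝ) (hρ : 0 < ρ2)
    (hclear : ∀ u : ℂ, ‖u‖ = 1 → ∀ w ∈ S, (1:ℝ)/8 ≤ ‖((T:ℂ) + ρ2 * u) - w‖)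
    (hbase : PApprox S (fun w => ((T:ℂ) + ρ2 * 1 - w)⁻¹)) :
    ∀ u : ℂ, ‖u‖ = 1 → PApprox S (fun w => ((T:ℂ) + ρ2 * u - w)⁻¹) := by
  set ε₀ : ℝ := 1 / (64 * (ρ2 + 1)) with hε₀
  have hε₀pos : 0 < ε₀ := by positivity
  have hε₀le : ε₀ ≤ 1 := by
    rw [hε₀, div_le_one (by positivity)]; nlinarith
  have hunit : ∀ φ : ℝ, ‖Complex.exp (φ * Complex.I)‖ = 1 := by
    intro φ
    rw [Complex.norm_exp]
    simp
  have key : ∀ k : ℕ, ∀ φ : ℝ, |φ| ≤ k * ε₀ →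
      PApprox S (fun w => ((T:ℂ) + ρ2 * Complex.exp (φ * Complex.I) - w)⁻¹) := by
    intro k
    induction k with
    | zero =>
        intro φ hφ
        have h0 : φ = 0 := by
          have := abs_nonneg φ
          have : |φ| = 0 := le_antisymm (by simpa using hφ) (abs_nonneg φ)
          exact abs_eq_zero.mp this
        subst h0
        apply papprox_congr _ hbase
        intro w _
        norm_num
    | succ k ih =>
        intro φ hφ
        by_cases hcase : |φ| ≤ k * ε₀
        · exact ih φ hcase
        · push_neg at hcase
          have hkε : (0:ℝ) ≤ k * ε₀ := by positivity
          have hφ0 : φ ≠ 0 := by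
            intro h0; rw [h0] at hcase; simp at hcase; linarith
          have hφabs : (0:ℝ) < |φ| := abs_pos.mpr hφ0
          set φ' : ℝ := φ * ((k * ε₀) / |φ|) with hφ'
          have habs : |φ'| = k * ε₀ := by
            rw [hφ', abs_mul, abs_div, abs_abs, abs_of_nonneg hkε]
            field_simp
          have hdiff : |φ - φ'| = |φ| - k * ε₀ := by
            have h1 : φ - φ' = φ * ((|φ| - k * ε₀) / |φ|) := by
              rw [hφ']; field_simp
            rw [h1, abs_mul, abs_div, abs_abs,
              abs_of_nonneg (by linarith [hcase] : (0:ℝ) ≤ |φ| - k * ε₀)]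
            field_simp
          have hdle : |φ - φ'| ≤ ε₀ := by
            rw [hdiff]
            have : |φ| ≤ (k + 1 : ℕ) * ε₀ := hφ
            push_cast at this
            linarith
          have ihφ' := ih φ' (le_of_eq habs)
          apply papprox_push hS (show (0:ℝ) < 1/8 by norm_num)
            ((T:ℂ) + ρ2 * Complex.exp (φ' * Complex.I))
            ((T:ℂ) + ρ2 * Complex.exp (φ * Complex.I))
            (hclear _ (hunit φ')) ?_ ihφ'
          -- distance bound
          have hexp : ‖Complex.exp (φ' * Complex.I) - Complex.exp (φ * Complex.I)‖
              ≤ 2 * |φ - φ'| := by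
            have hfac : Complex.exp (φ' * Complex.I) - Complex.exp (φ * Complex.I)
                = Complex.exp (φ' * Complex.I)
                  * (1 - Complex.exp ((φ - φ') * Complex.I)) := by
              rw [mul_sub, mul_one, ← Complex.exp_add]
              push_cast
              ring_nf
            rw [hfac, norm_mul, hunit, one_mul]
            have habs1 : ‖((↑(φ - φ') : ℂ) * Complex.I)‖ ≤ 1 := by
              rw [norm_mul, Complex.norm_I, mul_one, Complex.norm_real, Real.norm_eq_abs]
              linarith [hdle, hε₀le]
            have := Complex.norm_exp_sub_one_le habs1
            rw [norm_sub_rev]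
            calc ‖(Complex.exp ((φ - φ') * Complex.I) - 1)‖
                ≤ 2 * ‖((↑(φ - φ') : ℂ) * Complex.I)‖ := by
                  exact_mod_cast this
              _ = 2 * |φ - φ'| := by
                  rw [norm_mul, Complex.norm_I, mul_one, Complex.norm_real, Real.norm_eq_abs]
          calc ‖((T:ℂ) + ρ2 * Complex.exp (φ' * Complex.I))
                - ((T:ℂ) + ρ2 * Complex.exp (φ * Complex.I))‖
              = ‖(ρ2:ℂ)‖ * ‖Complex.exp (φ' * Complex.I) - Complex.exp (φ * Complex.I)‖ := by
                rw [← norm_mul]; congr 1; ring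
            _ ≤ ρ2 * (2 * |φ - φ'|) := by
                rw [Complex.norm_real, Real.norm_eq_abs, abs_of_pos hρ]
                exact mul_le_mul_of_nonneg_left hexp hρ.le
            _ ≤ ρ2 * (2 * ε₀) := by nlinarith
            _ ≤ 1 / 8 / 2 := by
                have hrw : ρ2 * (2 * ε₀) = ρ2 / (32 * (ρ2 + 1)) := by
                  rw [hε₀]; field_simp; ring
                rw [hrw, show (1/8/2 : ℝ) = 1/16 by norm_num,
                  div_le_div_iff₀ (by positivity) (by norm_num)]
                nlinarith
  intro u hu
  have habsu : ‖u‖ = 1 := hu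
  have hexpu : Complex.exp ((Complex.arg u : ℝ) * Complex.I) = u := by
    have := Complex.norm_mul_exp_arg_mul_I u
    rw [habsu] at this
    simpa using this
  set k : ℕ := ⌈Real.pi / ε₀⌉₊ with hk
  have hπ : |Complex.arg u| ≤ k * ε₀ := by
    calc |Complex.arg u| ≤ Real.pi := Complex.abs_arg_le_pi u
      _ ≤ k * ε₀ := by
          have := Nat.le_ceil (Real.pi / ε₀)
          rw [← hk] at this
          calc Real.pi = Real.pi / ε₀ * ε₀ := by field_simp
            _ ≤ k * ε₀ := mul_le_mul_of_nonneg_right this hε₀pos.le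
  have := key k (Complex.arg u) hπ
  apply papprox_congr _ this
  intro w _
  rw [hexpu]

lemma papprox_pow2 {S : Set ℂ} (hS : IsCompact S) (T ρ2 : ℝ) (hρ : 0 < ρ2)
    (hall : ∀ u : ℂ, ‖u‖ = 1 → PApprox S (fun w => ((T:ℂ) + ρ2 * u - w)⁻¹)) :
    ∀ (j : ℕ) (α : ℂ), ‖α‖ = 1 →
      PApprox S (fun w => (1 - α * ((w - T) / ρ2) ^ (2 ^ j))⁻¹) := by
  intro j
  induction j with
  | zero =>
      intro α hα
      have hα0 : α ≠ 0 := by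
        intro h; rw [h] at hα; simp at hα
      have hinv : ‖α⁻¹‖ = 1 := by rw [norm_inv, hα]; norm_num
      have h0 := papprox_smul ((α / (ρ2:ℂ))⁻¹) (hall α⁻¹ hinv)
      apply papprox_congr _ h0
      intro w _
      have hρ0 : (ρ2:ℂ) ≠ 0 := Complex.ofReal_ne_zero.mpr hρ.ne'
      have hkey : ((T:ℂ) + ρ2 * α⁻¹ - w) * (α / ρ2) = 1 - α * ((w - T) / ρ2) ^ (2 ^ 0) := by
        field_simp
        ring_nf
        rw [mul_inv_cancel_right₀ hρ0, mul_right_comm α, mul_inv_cancel_right₀ hρ0]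
      rw [← hkey, mul_inv, mul_comm]
  | succ j ih =>
      intro α hα
      obtain ⟨β, hβ⟩ := IsAlgClosed.exists_pow_nat_eq α (n := 2) (by norm_num)
      have hβn : ‖β‖ = 1 := by
        have h2 : ‖β‖ ^ 2 = 1 := by rw [← norm_pow, hβ, hα]
        nlinarith [norm_nonneg β]
      have h1 := ih β hβn
      have h2 := ih (-β) (by rw [norm_neg]; exact hβn)
      have h3 := papprox_mul hS h1 h2
      apply papprox_congr _ h3
      intro w _
      rw [← mul_inv]
      congr 1
      have hp : ((w - T) / (ρ2:ℂ)) ^ (2 ^ (j + 1)) = (((w - T) / ρ2) ^ (2 ^ j)) ^ 2 := by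
        rw [← pow_mul, pow_succ]
      rw [hp, ← hβ]
      ring

/-- Main one-variable lemma: a polynomial close to `0` on `A` and to `1` on `B`,
whenever `A` lies in `{re ≤ -1}` and `B` in `{re ≥ 1}`. -/
lemma oneDim {A B : Set ℂ} (hA : IsCompact A) (hB : IsCompact B)
    (hA1 : ∀ w ∈ A, w.re ≤ -1) (hB1 : ∀ w ∈ B, 1 ≤ w.re)
    (ε : ℝ) (hε : 0 < ε) :
    ∃ p : Polynomial ℂ, (∀ w ∈ A, ‖p.eval w‖ ≤ ε) ∧ (∀ w ∈ B, ‖p.eval w - 1‖ ≤ ε) := by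
  classical
  set S : Set ℂ := A ∪ B with hSdef
  have hS : IsCompact S := hA.union hB
  obtain ⟨M, hM1, hnorm⟩ : ∃ M : ℝ, 1 ≤ M ∧ ∀ w ∈ S, ‖w‖ ≤ M := by
    obtain ⟨M₀, hM₀⟩ := hS.isBounded.subset_closedBall (0:ℂ)
    refine ⟨max M₀ 1, le_max_right _ _, fun w hw => ?_⟩
    have := hM₀ hw
    rw [Metric.mem_closedBall, dist_eq_norm, sub_zero] at this
    exact this.trans (le_max_left _ _)
  have hSM : S ⊆ Metric.closedBall 0 M := by
    intro w hw
    rw [Metric.mem_closedBall, dist_eq_norm, sub_zero]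
    exact hnorm w hw
  set T : ℝ := 4 * M ^ 2 with hT
  have hT4 : (4:ℝ) ≤ T := by nlinarith
  have hMT : M ≤ T := by nlinarith
  obtain ⟨ρ, hρsq, hρpos⟩ : ∃ ρ : ℝ, ρ ^ 2 = (T - 1) ^ 2 + M ^ 2 ∧ 0 < ρ :=
    ⟨Real.sqrt _, Real.sq_sqrt (by nlinarith), Real.sqrt_pos.mpr (by nlinarith)⟩
  obtain ⟨ρ2, hρ2sq, hρ2pos⟩ : ∃ r : ℝ, r ^ 2 = (T - 1) ^ 2 + 2 * M ^ 2 ∧ 0 < r :=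
    ⟨Real.sqrt _, Real.sq_sqrt (by nlinarith), Real.sqrt_pos.mpr (by nlinarith)⟩
  have hρltρ2 : ρ < ρ2 := by nlinarith
  have hρ2T : ρ2 ≤ T := by nlinarith
  have hgap1 : ρ2 - ρ ≥ 1/8 := by nlinarith
  have hgap2 : (T + 1) - ρ2 ≥ 1/8 := by nlinarith
  -- bounds on distances to T
  have hBd : ∀ w ∈ B, ‖w - (T:ℂ)‖ ≤ ρ := by
    intro w hw
    have hre : 1 ≤ w.re := hB1 w hw
    have hwS : ‖w‖ ≤ M := hnorm w (Or.inr hw)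
    have hreM : w.re ≤ M := by
      have h1 := Complex.abs_re_le_norm w
      linarith [le_abs_self w.re]
    have him : |w.im| ≤ M := by
      have h1 := Complex.abs_im_le_norm w
      linarith
    have hsq : ‖w - (T:ℂ)‖ ^ 2 ≤ ρ ^ 2 := by
      rw [hρsq]
      have hexp : ‖w - (T:ℂ)‖ ^ 2 = (w.re - T) ^ 2 + w.im ^ 2 := by
        rw [Complex.sq_norm, Complex.normSq_apply]
        simp [Complex.sub_re, Complex.sub_im]
        ring
      rw [hexp]
      have h1 : (w.re - T) ^ 2 ≤ (T - 1) ^ 2 := by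
        nlinarith [mul_nonneg (sub_nonneg.mpr hre)
          (show (0:ℝ) ≤ 2 * T - 1 - w.re by linarith)]
      have h2 : w.im ^ 2 ≤ M ^ 2 := by nlinarith [abs_nonneg w.im, sq_abs w.im]
      linarith
    nlinarith [norm_nonneg (w - (T:ℂ))]
  have hAd : ∀ w ∈ A, T + 1 ≤ ‖w - (T:ℂ)‖ := by
    intro w hw
    have hre : w.re ≤ -1 := hA1 w hw
    have h1 : |(w - (T:ℂ)).re| ≤ ‖w - (T:ℂ)‖ := by
      exact Complex.abs_re_le_norm _
    have h2 : (w - (T:ℂ)).re = w.re - T := by simp [Complex.sub_re]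
    rw [h2] at h1
    have h3 : T - w.re ≤ |w.re - T| := by rw [abs_sub_comm]; exact le_abs_self _
    linarith
  -- clearance of the circle
  have hclear : ∀ u : ℂ, ‖u‖ = 1 → ∀ w ∈ S, (1:ℝ)/8 ≤ ‖((T:ℂ) + ρ2 * u) - w‖ := by
    intro u hu w hw
    have hρu : ‖(ρ2:ℂ) * u‖ = ρ2 := by
      rw [norm_mul, hu, mul_one, Complex.norm_real, Real.norm_eq_abs, abs_of_pos hρ2pos]
    rcases hw with hwA | hwB
    · have h1 : ‖w - (T:ℂ)‖ - ‖(ρ2:ℂ) * u‖ ≤ ‖(w - (T:ℂ)) - (ρ2:ℂ) * u‖ :=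
        norm_sub_norm_le _ _
      have h2 : ((T:ℂ) + ρ2 * u) - w = -((w - (T:ℂ)) - (ρ2:ℂ) * u) := by ring
      rw [h2, norm_neg]
      have := hAd w hwA
      rw [hρu] at h1
      linarith
    · have h1 : ‖(ρ2:ℂ) * u‖ - ‖w - (T:ℂ)‖ ≤ ‖(ρ2:ℂ) * u - (w - (T:ℂ))‖ :=
        norm_sub_norm_le _ _
      have h2 : ((T:ℂ) + ρ2 * u) - w = (ρ2:ℂ) * u - (w - (T:ℂ)) := by ring
      rw [h2]
      have := hBd w hwB
      rw [hρu] at h1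
      linarith
  -- base point
  have hbase : PApprox S (fun w => ((T:ℂ) + ρ2 * 1 - w)⁻¹) := by
    have hbig : 2 * M + 2 ≤ ‖(T:ℂ) + ρ2 * 1‖ := by
      have hcast : ((T:ℂ) + ρ2 * 1) = ((T + ρ2 : ℝ) : ℂ) := by push_cast; ring
      rw [hcast, Complex.norm_real, Real.norm_eq_abs, abs_of_pos (by linarith)]
      nlinarith
    exact papprox_base hM1 hSM _ hbig
  have hall := papprox_walk hS T ρ2 hρ2pos hclear hbase
  have hpow2 := papprox_pow2 hS T ρ2 hρ2pos hall
  -- the indicator function of B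
  set g : ℂ → ℂ := fun w => if 1 ≤ w.re then 1 else 0 with hg
  have hgB : ∀ w ∈ B, g w = 1 := fun w hw => if_pos (hB1 w hw)
  have hgA : ∀ w ∈ A, g w = 0 := fun w hw => if_neg (by
    have := hA1 w hw; intro hcon; linarith)
  have happroxg : PApprox S g := by
    apply papprox_lim
    intro δ hδ
    set θ : ℝ := ρ / ρ2 with hθdef
    set κ : ℝ := (T + 1) / ρ2 with hκdef
    have hθ0 : 0 ≤ θ := by rw [hθdef]; positivity
    have hθ1 : θ < 1 := by rw [hθdef, div_lt_one hρ2pos]; exact hρltρ2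
    have hκ1 : 1 < κ := by rw [hκdef, lt_div_iff₀ hρ2pos]; linarith
    have ht1 : Tendsto (fun m : ℕ => θ ^ m) atTop (nhds 0) :=
      tendsto_pow_atTop_nhds_zero_of_lt_one hθ0 hθ1
    have ht2 : Tendsto (fun m : ℕ => κ ^ m) atTop atTop :=
      tendsto_pow_atTop_atTop_of_one_lt hκ1
    have ht3 : Tendsto (fun j : ℕ => 2 ^ j) atTop atTop :=
      tendsto_pow_atTop_atTop_of_one_lt (by norm_num)
    have hev1 : ∀ᶠ m : ℕ in atTop, θ ^ m < min (1/2) (δ/2) :=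
      ht1.eventually (gt_mem_nhds (lt_min (by norm_num) (by positivity)))
    have hev2 : ∀ᶠ m : ℕ in atTop, κ ^ m ≥ 1 + 1/δ := ht2.eventually_ge_atTop _
    obtain ⟨j, hj1, hj2⟩ := (ht3.eventually (hev1.and hev2)).exists
    set m : ℕ := 2 ^ j with hm
    refine ⟨fun w => (1 - 1 * ((w - T) / ρ2) ^ m)⁻¹, hpow2 j 1 (by norm_num), ?_⟩
    intro w hw
    set y : ℂ := (w - T) / ρ2 with hy
    have hym : ‖y‖ = ‖w - (T:ℂ)‖ / ρ2 := by
      rw [hy, norm_div, Complex.norm_real, Real.norm_eq_abs, abs_of_pos hρ2pos]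
    rcases hw with hwA | hwB
    · rw [hgA w hwA]
      have hyA : κ ≤ ‖y‖ := by
        rw [hym, hκdef]
        gcongr
        exact hAd w hwA
      have hbig : κ ^ m - 1 ≤ ‖1 - y ^ m‖ := by
        have h1 : ‖y ^ m‖ - ‖(1:ℂ)‖ ≤ ‖y ^ m - 1‖ := norm_sub_norm_le _ _
        rw [norm_sub_rev] at h1
        rw [norm_pow] at h1
        have h2 : κ ^ m ≤ ‖y‖ ^ m := pow_le_pow_left₀ (by positivity) hyA m
        simp only [norm_one] at h1
        linarith
      have h1δ : (0:ℝ) < 1/δ := by positivity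
      have hpos : 0 < κ ^ m - 1 := by linarith
      have hno : ‖(0:ℂ) - (1 - 1 * y ^ m)⁻¹‖ = ‖1 - y ^ m‖⁻¹ := by
        rw [zero_sub, norm_neg, one_mul, norm_inv]
      rw [hno]
      calc ‖1 - y ^ m‖⁻¹ ≤ (κ ^ m - 1)⁻¹ := by
            exact inv_anti₀ hpos hbig
        _ ≤ δ := by
            rw [inv_le_comm₀ hpos hδ]
            have : (1:ℝ)/δ = δ⁻¹ := one_div δ
            linarith
    · rw [hgB w hwB]
      have hyB : ‖y‖ ≤ θ := by
        rw [hym, hθdef]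
        gcongr
        exact hBd w hwB
      have hymθ : ‖y ^ m‖ ≤ θ ^ m := by
        rw [norm_pow]
        exact pow_le_pow_left₀ (norm_nonneg y) hyB m
      have hsmall : ‖y ^ m‖ ≤ 1/2 :=
        le_trans hymθ (le_of_lt (lt_of_lt_of_le hj1 (min_le_left _ _)))
      have hlow : (1:ℝ)/2 ≤ ‖1 - y ^ m‖ := by
        have h1 : ‖(1:ℂ)‖ - ‖y ^ m‖ ≤ ‖1 - y ^ m‖ := norm_sub_norm_le _ _
        simp only [norm_one] at h1
        linarith
      have hne : (1:ℂ) - y ^ m ≠ 0 := by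
        intro h0
        rw [h0, norm_zero] at hlow
        linarith
      have hid : (1:ℂ) - (1 - 1 * y ^ m)⁻¹ = -(y ^ m * (1 - y ^ m)⁻¹) := by
        rw [one_mul]
        field_simp
        ring
      rw [hid, norm_neg, norm_mul, norm_inv]
      calc ‖y ^ m‖ * ‖1 - y ^ m‖⁻¹ ≤ (θ ^ m) * 2 := by
            apply mul_le_mul hymθ _ (by positivity) (by positivity)
            rw [inv_le_comm₀ (by linarith) (by norm_num)]
            linarith
        _ ≤ δ := by
            have : θ ^ m < δ/2 := lt_of_lt_of_le hj1 (min_le_right _ _)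
            nlinarith [pow_nonneg hθ0 m]
  -- conclude
  obtain ⟨p, hp⟩ := happroxg ε hε
  refine ⟨p, fun w hw => ?_, fun w hw => ?_⟩
  · have := hp w (Or.inl hw)
    rw [hgA w hw] at this
    rw [zero_sub, norm_neg] at this
    exact this
  · have := hp w (Or.inr hw)
    rw [hgB w hw] at this
    rw [norm_sub_rev]
    exact this

end RungeAux

/-- simultaneous approximation of `0` on `L ⊆ Ω` and of `P` on a compact
convex set `K` disjoint from `Ω`. -/
theorem approx_zero_and_P (n : ℕ) (Ω : Set (Fin n → ℂ))
    (hΩo : IsOpen Ω) (hΩcv : Convex ℝ Ω)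
    (L : Set (Fin n → ℂ)) (hLcpt : IsCompact L) (hLcv : Convex ℝ L) (hLsub : L ⊆ Ω)
    (K : Set (Fin n → ℂ)) (hKcpt : IsCompact K) (hKcv : Convex ℝ K) (hKΩ : K ∩ Ω = ∅)
    (P : MvPolynomial (Fin n) ℂ) (ε : ℝ) (hε : 0 < ε) :
    ∃ Q : MvPolynomial (Fin n) ℂ,
      (∀ z ∈ L, ‖mvEval Q z‖ < ε) ∧ (∀ z ∈ K, ‖mvEval Q z - mvEval P z‖ < ε) := by

  classical
  -- separation
  have hdisj : Disjoint L K := by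
    rw [Set.disjoint_left]
    intro z hzL hzK
    have : z ∈ K ∩ Ω := ⟨hzK, hLsub hzL⟩
    rw [hKΩ] at this
    exact this
  obtain ⟨f, u, v, hfL, huv, hfK⟩ :=
    geometric_hahn_banach_compact_closed hLcv hLcpt hKcv hKcpt.isClosed hdisj
  set δ : ℝ := (v - u) / 2 with hδdef
  set c : ℝ := (u + v) / 2 with hcdef
  have hδpos : 0 < δ := by rw [hδdef]; linarith
  -- complex-linear functional with real part f
  set Λ : (Fin n → ℂ) →ₗ[ℂ] ℂ := LinearMap.extendTo𝕜' (f : (Fin n → ℂ) →L[ℝ] ℝ).toLinearMap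
    with hΛdef
  have hre : ∀ z, (Λ z).re = f z := by
    intro z
    have h0 := LinearMap.extendTo𝕜'_apply_re (𝕜 := ℂ)
      ((f : (Fin n → ℂ) →L[ℝ] ℝ).toLinearMap) z
    rw [hΛdef]
    exact h0
  have hΛsum : ∀ z : Fin n → ℂ, Λ z = ∑ j, z j * Λ (Pi.single j 1) := by
    intro z
    have hz : z = ∑ j, (z j) • (Pi.single j 1 : Fin n → ℂ) := by
      have h1 : ∀ j : Fin n, (z j) • (Pi.single j 1 : Fin n → ℂ) = Pi.single j (z j) := by
        intro j
        rw [← Pi.single_smul, smul_eq_mul, mul_one]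
      rw [Finset.sum_congr rfl (fun j _ => h1 j), Finset.univ_sum_single]
    conv_lhs => rw [hz]
    rw [map_sum]
    exact Finset.sum_congr rfl (fun j _ => by rw [map_smul, smul_eq_mul])
  -- the affine polynomial W
  set W : MvPolynomial (Fin n) ℂ :=
    (∑ j, MvPolynomial.C (Λ (Pi.single j 1) / (δ:ℂ)) * MvPolynomial.X j)
      - MvPolynomial.C ((c:ℂ) / (δ:ℂ)) with hWdef
  have hδ0 : ((δ:ℝ):ℂ) ≠ 0 := Complex.ofReal_ne_zero.mpr hδpos.ne'
  have hWeval : ∀ z, MvPolynomial.eval z W = (Λ z - c) / (δ:ℂ) := by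
    intro z
    rw [hWdef, map_sub, map_sum, MvPolynomial.eval_C]
    have h1 : ∀ j, MvPolynomial.eval z (MvPolynomial.C (Λ (Pi.single j 1) / (δ:ℂ))
        * MvPolynomial.X j) = z j * Λ (Pi.single j 1) / (δ:ℂ) := by
      intro j
      rw [MvPolynomial.eval_mul, MvPolynomial.eval_C, MvPolynomial.eval_X]
      ring
    rw [Finset.sum_congr rfl (fun j _ => h1 j)]
    rw [hΛsum z]
    rw [← Finset.sum_div]
    ring
  -- real part bounds
  have hWre : ∀ z, (MvPolynomial.eval z W).re = (f z - c) / δ := by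
    intro z
    rw [hWeval z]
    have : ((Λ z - (c:ℂ)) / ((δ:ℝ):ℂ)).re = (Λ z - (c:ℂ)).re / δ :=
      Complex.div_ofReal_re _ _
    rw [this, Complex.sub_re, Complex.ofReal_re, hre]
  -- images
  set A : Set ℂ := (fun z => MvPolynomial.eval z W) '' L with hAdef
  set B : Set ℂ := (fun z => MvPolynomial.eval z W) '' K with hBdef
  have hWcont : Continuous fun z : Fin n → ℂ => MvPolynomial.eval z W :=
    MvPolynomial.continuous_eval W
  have hAcpt : IsCompact A := hLcpt.image hWcont
  have hBcpt : IsCompact B := hKcpt.image hWcont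
  have hA1 : ∀ w ∈ A, w.re ≤ -1 := by
    rintro w ⟨z, hz, rfl⟩
    rw [hWre z, div_le_iff₀ hδpos]
    have : f z < u := hfL z hz
    have hu : u = c - δ := by rw [hcdef, hδdef]; ring
    linarith
  have hB1 : ∀ w ∈ B, 1 ≤ w.re := by
    rintro w ⟨z, hz, rfl⟩
    rw [hWre z, le_div_iff₀ hδpos]
    have : v < f z := hfK z hz
    have hv : v = c + δ := by rw [hcdef, hδdef]; ring
    linarith
  -- bound on P over L ∪ K
  obtain ⟨C₀, hC₀⟩ := (hLcpt.union hKcpt).exists_bound_of_continuousOn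
    (MvPolynomial.continuous_eval P).continuousOn
  set CP : ℝ := max C₀ 0 + 1 with hCPdef
  have hCPpos : 0 < CP := by positivity
  have hCP : ∀ z ∈ L ∪ K, ‖MvPolynomial.eval z P‖ ≤ CP := by
    intro z hz
    calc ‖MvPolynomial.eval z P‖ ≤ C₀ := hC₀ z hz
      _ ≤ CP := by rw [hCPdef]; nlinarith [le_max_left C₀ 0]
  -- one-variable approximation
  obtain ⟨r, hrA, hrB⟩ := RungeAux.oneDim hAcpt hBcpt hA1 hB1 (ε / (2 * CP))
    (by positivity)
  -- the polynomial Q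
  set Q : MvPolynomial (Fin n) ℂ := P * Polynomial.aeval W r with hQdef
  have haeval : ∀ z : Fin n → ℂ,
      MvPolynomial.eval z (Polynomial.aeval W r) = Polynomial.eval (MvPolynomial.eval z W) r := by
    intro z
    have hmv : ∀ q : MvPolynomial (Fin n) ℂ, MvPolynomial.aeval z q = MvPolynomial.eval z q := by
      intro q
      exact RingHom.congr_fun (MvPolynomial.coe_aeval_eq_eval (f := z)) q
    have key := Polynomial.aeval_algHom_apply (MvPolynomial.aeval (R := ℂ) z) W r
    simp only [hmv] at key
    rw [← key]
    exact congrFun (Polynomial.coe_aeval_eq_eval _) r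
  have hQeval : ∀ z, mvEval Q z
      = MvPolynomial.eval z P * Polynomial.eval (MvPolynomial.eval z W) r := by
    intro z
    show MvPolynomial.eval z Q = _
    rw [hQdef, map_mul, haeval z]
  refine ⟨Q, fun z hz => ?_, fun z hz => ?_⟩
  · rw [hQeval z, norm_mul]
    have h1 : ‖Polynomial.eval (MvPolynomial.eval z W) r‖ ≤ ε / (2 * CP) :=
      hrA _ ⟨z, hz, rfl⟩
    have h2 : ‖MvPolynomial.eval z P‖ ≤ CP := hCP z (Or.inl hz)
    calc ‖MvPolynomial.eval z P‖ * ‖Polynomial.eval (MvPolynomial.eval z W) r‖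
        ≤ CP * (ε / (2 * CP)) := mul_le_mul h2 h1 (norm_nonneg _) hCPpos.le
      _ = ε / 2 := by field_simp
      _ < ε := by linarith
  · have hPz : mvEval P z = MvPolynomial.eval z P := rfl
    rw [hQeval z, hPz]
    have hfactor : MvPolynomial.eval z P * Polynomial.eval (MvPolynomial.eval z W) r
        - MvPolynomial.eval z P
        = MvPolynomial.eval z P * (Polynomial.eval (MvPolynomial.eval z W) r - 1) := by ring
    rw [hfactor, norm_mul]
    have h1 : ‖Polynomial.eval (MvPolynomial.eval z W) r - 1‖ ≤ ε / (2 * CP) :=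
      hrB _ ⟨z, hz, rfl⟩
    have h2 : ‖MvPolynomial.eval z P‖ ≤ CP := hCP z (Or.inr hz)
    calc ‖MvPolynomial.eval z P‖ * ‖Polynomial.eval (MvPolynomial.eval z W) r - 1‖
        ≤ CP * (ε / (2 * CP)) := mul_le_mul h2 h1 (norm_nonneg _) hCPpos.le
      _ = ε / 2 := by field_simp
      _ < ε := by linarith


end
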